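/- Let K ≥ 2 and let η : {1,…,K} × {1,…,K} → (0,∞) satisfy: for every L ≥ 1 and all j_1,…,j_L ∈ {1,…,K}, the cyclic product η_{j_1→j_2} ⋯ η_{j_L→j_1} ≥ 1. Fix k ∈ {1,…,K}, set edge weights w(j,ℓ) = log η_{j→ℓ}, let m(ℓ) = min(ℓ→k) be the minimum weight over simple walks from ℓ to k (with m(k) = 0), and define θ* ∈ Δ by θ*_ℓ = exp(−m(ℓ)) / Σ_{ℓ'=1}^K exp(−m(ℓ')). Then θ* maximizes the k-th coordinate over the feasible polytope: for every θ' ∈ Δ satisfying θ'_i ≤ η_{j→i} · θ'_j for all i, j ∈ {1,…,K}, one has θ'_k ≤ θ*_k. -/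

import Mathlib

/-!
Every constraint `θ' i ≤ η j i * θ' j` chains along a walk from `ℓ` to `k` into
`θ' k ≤ exp (weight of the walk) * θ' ℓ`, so `exp (-m ℓ) * θ' k ≤ θ' ℓ` for every `ℓ`.
Summing over `ℓ` gives `θ' k * ∑ exp (-m ℓ) ≤ 1`, and since `m k = 0` the right-hand side
`1 / ∑ exp (-m ℓ)` is exactly `θ k`.
-/

noncomputable section

/-- The weight of the walk `j 0, j 1, …, j m` for edge weights `w`. -/
def walkWeight (K : ℕ) (w : Fin K → Fin K → ℝ) (m : ℕ) (j : Fin (m + 1) → Fin K) : ℝ :=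
  ∑ i : Fin m, w (j i.castSucc) (j i.succ)

/-- The minimum weight over simple walks (pairwise distinct vertices) from `a` to `b`. -/
def minWalk (K : ℕ) (w : Fin K → Fin K → ℝ) (a b : Fin K) : ℝ :=
  sInf {v : ℝ | ∃ (m : ℕ) (j : Fin (m + 1) → Fin K),
    j 0 = a ∧ j (Fin.last m) = b ∧ Function.Injective j ∧ v = walkWeight K w m j}

open Finset

namespace SimpleWalk

variable {K : ℕ} (w : Fin K → Fin K → ℝ)

lemma walkWeight_succ (n : ℕ) (j : Fin (n + 2) → Fin K) :
    walkWeight K w (n + 1) j = walkWeight K w n (fun i => j i.castSucc) +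
      w (j (Fin.last n).castSucc) (j (Fin.last (n + 1))) := by
  simp [walkWeight, Fin.sum_univ_castSucc, Fin.succ_last]

lemma le_exp_walkWeight_mul {x : Fin K → ℝ} (hx : ∀ i j, x i ≤ Real.exp (w j i) * x j)
    (n : ℕ) (j : Fin (n + 1) → Fin K) :
    x (j (Fin.last n)) ≤ Real.exp (walkWeight K w n j) * x (j 0) := by
  induction n with
  | zero => simp [walkWeight]
  | succ n ih =>
    have ih' := ih (fun i => j i.castSucc)
    simp only [Fin.castSucc_zero] at ih'
    calc x (j (Fin.last (n + 1)))
        ≤ Real.exp (w (j (Fin.last n).castSucc) (j (Fin.last (n + 1)))) *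
            x (j (Fin.last n).castSucc) := hx _ _
      _ ≤ Real.exp (w (j (Fin.last n).castSucc) (j (Fin.last (n + 1)))) *
            (Real.exp (walkWeight K w n (fun i => j i.castSucc)) * x (j 0)) := by
          gcongr
      _ = Real.exp (walkWeight K w (n + 1) j) * x (j 0) := by
          rw [walkWeight_succ, Real.exp_add]; ring

lemma exists_injective_walk (a b : Fin K) :
    ∃ (n : ℕ) (j : Fin (n + 1) → Fin K),
      j 0 = a ∧ j (Fin.last n) = b ∧ Function.Injective j := by
  by_cases hab : a = b
  · exact ⟨0, fun _ => a, rfl, hab, fun p q _ => Subsingleton.elim (α := Fin 1) p q⟩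
  · refine ⟨1, ![a, b], rfl, rfl, ?_⟩
    intro p q hpq
    fin_cases p <;> fin_cases q <;> simp_all [eq_comm]

lemma le_minWalk {a b : Fin K} {c : ℝ}
    (h : ∀ (n : ℕ) (j : Fin (n + 1) → Fin K), j 0 = a → j (Fin.last n) = b →
      Function.Injective j → c ≤ walkWeight K w n j) :
    c ≤ minWalk K w a b := by
  obtain ⟨n, j, h0, hl, hj⟩ := exists_injective_walk a b
  refine le_csInf ⟨_, n, j, h0, hl, hj, rfl⟩ ?_
  rintro _ ⟨n, j, h0, hl, hj, rfl⟩
  exact h n j h0 hl hj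

lemma minWalk_self (a : Fin K) : minWalk K w a a = 0 := by
  have hwalks : {v : ℝ | ∃ (n : ℕ) (j : Fin (n + 1) → Fin K),
      j 0 = a ∧ j (Fin.last n) = a ∧ Function.Injective j ∧ v = walkWeight K w n j} = {0} := by
    ext v
    constructor
    · rintro ⟨n, j, h0, hl, hj, rfl⟩
      obtain rfl : n = 0 := by
        simpa [Fin.ext_iff, eq_comm] using hj (h0.trans hl.symm)
      simp [walkWeight]
    · rintro rfl
      exact ⟨0, fun _ => a, rfl, rfl, fun p q _ => Subsingleton.elim (α := Fin 1) p q, by simp [walkWeight]⟩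
  rw [minWalk, hwalks, csInf_singleton]

lemma exp_neg_minWalk_mul_le {x : Fin K → ℝ} (hx0 : ∀ i, 0 ≤ x i)
    (hx : ∀ i j, x i ≤ Real.exp (w j i) * x j) (ℓ k : Fin K) :
    Real.exp (-minWalk K w ℓ k) * x k ≤ x ℓ := by
  rcases le_or_gt (x k) 0 with hk | hk
  · exact (mul_nonpos_of_nonneg_of_nonpos (Real.exp_pos _).le hk).trans (hx0 ℓ)
  have hℓ : 0 < x ℓ := by
    obtain ⟨n, j, h0, hl, -⟩ := exists_injective_walk ℓ k
    have := le_exp_walkWeight_mul w hx n j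
    rw [h0, hl] at this
    exact pos_of_mul_pos_right (hk.trans_le this) (Real.exp_pos _).le
  have hlog : Real.log (x k) - Real.log (x ℓ) ≤ minWalk K w ℓ k := by
    refine le_minWalk w fun n j h0 hl _ => ?_
    have hwalk := le_exp_walkWeight_mul w hx n j
    rw [h0, hl] at hwalk
    have := Real.log_le_log hk hwalk
    rw [Real.log_mul (Real.exp_ne_zero _) hℓ.ne', Real.log_exp] at this
    linarith
  calc Real.exp (-minWalk K w ℓ k) * x k
      ≤ Real.exp (Real.log (x ℓ) - Real.log (x k)) * x k := by gcongr; linarith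
    _ = x ℓ := by rw [Real.exp_sub, Real.exp_log hℓ, Real.exp_log hk, div_mul_cancel₀ _ hk.ne']

end SimpleWalk

open SimpleWalk in
theorem stmt14 (K : ℕ) (η : Fin K → Fin K → ℝ)
    (hpos : ∀ k ℓ, 0 < η k ℓ)
    (k : Fin K) (m : Fin K → ℝ)
    (hm : ∀ ℓ, m ℓ = minWalk K (fun a b => Real.log (η a b)) ℓ k)
    (θ : Fin K → ℝ)
    (hθ : ∀ ℓ, θ ℓ = Real.exp (-(m ℓ)) / ∑ ℓ' : Fin K, Real.exp (-(m ℓ'))) :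
    ∀ θ' ∈ stdSimplex ℝ (Fin K), (∀ i j, θ' i ≤ η j i * θ' j) → θ' k ≤ θ k := by
  intro θ' ⟨hθ'0, hθ'1⟩ hfeas
  have hfeas' : ∀ i j, θ' i ≤ Real.exp (Real.log (η j i)) * θ' j := fun i j => by
    rw [Real.exp_log (hpos j i)]; exact hfeas i j
  have hS : 0 < ∑ ℓ, Real.exp (-(m ℓ)) := sum_pos (fun _ _ => Real.exp_pos _) ⟨k, mem_univ k⟩
  have hbound : (∑ ℓ, Real.exp (-(m ℓ))) * θ' k ≤ 1 := by
    rw [← hθ'1, sum_mul]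
    refine sum_le_sum fun ℓ _ => ?_
    rw [hm ℓ]
    exact exp_neg_minWalk_mul_le _ hθ'0 hfeas' ℓ k
  rw [hθ k, hm k, minWalk_self, neg_zero, Real.exp_zero, le_div_iff₀ hS]
  linarith
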